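/- arXiv:2202.09710 — 5 statements merged into one kernel-verified Lean document; each statement's English description precedes it below -/
import Mathlib

section
/- Let h : ℝ^k → ℝ be a barrier certificate for the system ẋ = f(x,u) with unsafe set U, i.e., h(x) ≥ 0 for all x ∉ U, h(x) < 0 for all x ∈ U, and the derivative of h along trajectories is bounded below by -σ(h(x)) for an extended class-K function σ. Then any trajectory starting in the zero-super-level set Z(h) = {x : h(x) > 0} never enters U. -/
/-- trajectories starting in the zero-super-level set of a barrier
certificate never enter the unsafe set. -/
theorem stmt_1 {k : ℕ}
    (f : (Fin k → ℝ) → (Fin k → ℝ) → (Fin k → ℝ)) (u : ℝ → (Fin k → ℝ))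
    (U : Set (Fin k → ℝ))
    (h : (Fin k → ℝ) → ℝ)
    (hsafe : ∀ y, y ∉ U → h y ≥ 0)
    (hunsafe : ∀ y ∈ U, h y < 0)
    (x : ℝ → (Fin k → ℝ))
    (hx : ∀ t, HasDerivAt x (f (x t) (u t)) t)
    (σ : ℝ → ℝ) (hσc : Continuous σ) (hσm : StrictMono σ) (hσ0 : σ 0 = 0)
    (g' : ℝ → ℝ)
    (hgd : ∀ t, HasDerivAt (fun s => h (x s)) (g' t) t)
    (hg'c : Continuous g')
    (hineq : ∀ t, g' t ≥ -σ (h (x t)))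
    (h0 : h (x 0) > 0) :
    ∀ t ≥ (0 : ℝ), x t ∉ U := by
  set g : ℝ → ℝ := fun s => h (x s) with hg
  have hgc : Continuous g := by
    apply continuous_iff_continuousAt.2
    intro s
    exact (hgd s).continuousAt
  intro t ht hmem
  have hgt : g t < 0 := hunsafe _ hmem
  have ht0 : 0 < t := by
    rcases lt_or_eq_of_le ht with h' | h'
    · exact h'
    · exfalso; rw [← h'] at hgt; exact absurd h0 (not_lt.2 hgt.le)
  -- set of zeros of g in [0, t]
  set S : Set ℝ := {s | s ∈ Set.Icc (0:ℝ) t ∧ g s = 0} with hS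
  have hSne : S.Nonempty := by
    have := intermediate_value_Icc' ht.le (hgc.continuousOn (s := Set.Icc 0 t))
    have h0mem : (0:ℝ) ∈ Set.Icc (g t) (g 0) := ⟨hgt.le, h0.le⟩
    rcases this h0mem with ⟨c, hc, hgc0⟩
    exact ⟨c, hc, hgc0⟩
  have hSbdd : BddAbove S := ⟨t, fun s hs => hs.1.2⟩
  have hSclosed : IsClosed S := by
    have : S = Set.Icc (0:ℝ) t ∩ g ⁻¹' {0} := by
      ext s; simp [hS, Set.mem_inter_iff]
    rw [this]
    exact isClosed_Icc.inter (isClosed_singleton.preimage hgc)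
  set t₀ := sSup S with ht₀
  have ht₀mem : t₀ ∈ S := hSclosed.csSup_mem hSne hSbdd
  have hgt₀ : g t₀ = 0 := ht₀mem.2
  have ht₀le : t₀ ≤ t := ht₀mem.1.2
  have ht₀lt : t₀ < t := by
    rcases lt_or_eq_of_le ht₀le with h' | h'
    · exact h'
    · exfalso; rw [h'] at hgt₀; rw [hgt₀] at hgt; exact lt_irrefl 0 hgt
  -- g is negative on (t₀, t]
  have hneg : ∀ s ∈ Set.Ioc t₀ t, g s < 0 := by
    intro s hs
    by_contra hge
    push_neg at hge
    rcases lt_or_eq_of_le hge with hpos | heq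
    · -- g s > 0, g t < 0, IVT on [s, t] gives a zero > t₀
      have hst : s ≤ t := hs.2
      have := intermediate_value_Icc' hst (hgc.continuousOn (s := Set.Icc s t))
      have h0mem : (0:ℝ) ∈ Set.Icc (g t) (g s) := ⟨hgt.le, hpos.le⟩
      rcases this h0mem with ⟨c, hc, hgc0⟩
      have hcS : c ∈ S := ⟨⟨le_trans (le_trans ht₀mem.1.1 hs.1.le) hc.1, hc.2⟩, hgc0⟩
      have : c ≤ t₀ := le_csSup hSbdd hcS
      have : t₀ < c := lt_of_lt_of_le hs.1 hc.1
      linarith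
    · have hcS : s ∈ S := ⟨⟨le_trans ht₀mem.1.1 hs.1.le, hs.2⟩, heq.symm⟩
      have : s ≤ t₀ := le_csSup hSbdd hcS
      linarith [hs.1]
  -- g strictly increasing on [t₀, t]
  have hmono : StrictMonoOn g (Set.Icc t₀ t) := by
    apply strictMonoOn_of_deriv_pos (convex_Icc t₀ t) hgc.continuousOn
    intro s hs
    rw [interior_Icc] at hs
    have hgs : g s < 0 := hneg s ⟨hs.1, hs.2.le⟩
    have hσneg : σ (g s) < 0 := by
      have := hσm hgs
      rwa [hσ0] at this
    have : g' s > 0 := lt_of_lt_of_le (by linarith) (hineq s)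
    rwa [(hgd s).deriv]
  have : g t₀ < g t := hmono (Set.left_mem_Icc.2 ht₀le) (Set.right_mem_Icc.2 ht₀le) ht₀lt
  rw [hgt₀] at this
  linarith
end

section
/- Let x : [0,η] → ℝ^k be a continuously differentiable trajectory with x(0) in the restricted admissible set A_r = {y : x_lb + μ_dec < y < x_ub − μ_inc} (componentwise). Suppose that whenever x(t) lies in the admissible set A = {y : x_lb ≤ y ≤ x_ub}, the derivative satisfies ẋ_min ≤ ẋ(t) ≤ x_max componentwise, where μ_dec = |min(0, η·ẋ_min)| and μ_inc = |max(0, η·ẋ_max)| componentwise. Then x(t) ∈ A for all t ∈ [0,η]. -/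
/-!
Componentwise, `x` can move by at most `η · ẋ_max` upwards and `η · ẋ_min` downwards as long
as it stays admissible, and the margins `μ_inc`, `μ_dec` absorb exactly these displacements.
So up to the first time `t₀` at which `x` leaves the open box `x_lb < y < x_ub`, the derivative
bounds apply on `[0, t₀)`, and the mean value theorem puts `x t₀` strictly inside the box again.
-/

open Set

theorem ContinuousOn.mapsTo_Icc_of_forall_mapsTo_Ico {X : Type*} [TopologicalSpace X]
    {x : ℝ → X} {U : Set X} {a b : ℝ} (hU : IsOpen U) (hx : ContinuousOn x (Icc a b))
    (hstep : ∀ t ∈ Icc a b, MapsTo x (Ico a t) U → x t ∈ U) :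
    MapsTo x (Icc a b) U := by
  by_contra hexit
  set F := Icc a b ∩ x ⁻¹' Uᶜ
  have hFne : F.Nonempty := by
    simp only [MapsTo, not_forall, exists_prop] at hexit
    exact hexit
  have hFbdd : BddBelow F := ⟨a, fun t ht => ht.1.1⟩
  have hFinf : sInf F ∈ F :=
    (hx.preimage_isClosed_of_isClosed isClosed_Icc hU.isClosed_compl).csInf_mem hFne hFbdd
  refine hFinf.2 (hstep _ hFinf.1 fun s hs => ?_)
  by_contra hsU
  have hsF : s ∈ F := ⟨⟨hs.1, hs.2.le.trans hFinf.1.2⟩, hsU⟩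
  exact (csInf_le hFbdd hsF).not_gt hs.2

theorem sub_mem_Icc_of_hasDerivAt_of_mem_Icc {f f' : ℝ → ℝ} {a b m M : ℝ} (hab : a ≤ b)
    (hf : ∀ t ∈ Icc a b, HasDerivAt f (f' t) t) (hf' : ∀ t ∈ Ioo a b, f' t ∈ Icc m M) :
    f b - f a ∈ Icc (m * (b - a)) (M * (b - a)) := by
  have hcont : ContinuousOn f (Icc a b) := fun t ht => (hf t ht).continuousAt.continuousWithinAt
  have hderiv : ∀ t ∈ Ioo a b, deriv f t = f' t := fun t ht =>
    (hf t (Ioo_subset_Icc_self ht)).deriv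
  have hdiff : DifferentiableOn ℝ f (interior (Icc a b)) := by
    rw [interior_Icc]
    exact fun t ht => (hf t (Ioo_subset_Icc_self ht)).differentiableAt.differentiableWithinAt
  constructor
  · refine (convex_Icc a b).mul_sub_le_image_sub_of_le_deriv hcont hdiff (fun t ht => ?_)
      a (left_mem_Icc.2 hab) b (right_mem_Icc.2 hab) hab
    rw [interior_Icc] at ht
    exact hderiv t ht ▸ (hf' t ht).1
  · refine (convex_Icc a b).image_sub_le_mul_sub_of_deriv_le hcont hdiff (fun t ht => ?_)
      a (left_mem_Icc.2 hab) b (right_mem_Icc.2 hab) hab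
    rw [interior_Icc] at ht
    exact hderiv t ht ▸ (hf' t ht).2

theorem min_zero_mul_le_mul_of_mem_Icc {η t d : ℝ} (ht : t ∈ Icc 0 η) :
    min 0 (η * d) ≤ t * d := by
  rcases le_total 0 d with hd | hd
  · exact (min_le_left _ _).trans (mul_nonneg ht.1 hd)
  · exact (min_le_right _ _).trans (mul_le_mul_of_nonpos_right ht.2 hd)

theorem mul_le_max_zero_mul_of_mem_Icc {η t d : ℝ} (ht : t ∈ Icc 0 η) :
    t * d ≤ max 0 (η * d) := by
  rcases le_total 0 d with hd | hd
  · exact (mul_le_mul_of_nonneg_right ht.2 hd).trans (le_max_right _ _)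
  · exact (mul_nonpos_of_nonneg_of_nonpos ht.1 hd).trans (le_max_left _ _)

theorem stmt_4_general {k : ℕ} (η : ℝ)
    (x x' : ℝ → (Fin k → ℝ))
    (hx : ∀ t ∈ Set.Icc (0 : ℝ) η, HasDerivAt x (x' t) t)
    (xlb xub dmin dmax μdec μinc : Fin k → ℝ)
    (hμdec : ∀ i, μdec i = |min 0 (η * dmin i)|)
    (hμinc : ∀ i, μinc i = |max 0 (η * dmax i)|)
    (h0 : ∀ i, xlb i + μdec i < x 0 i ∧ x 0 i < xub i - μinc i)
    (hder : ∀ t ∈ Set.Icc (0 : ℝ) η,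
      (∀ i, xlb i ≤ x t i ∧ x t i ≤ xub i) →
      ∀ i, dmin i ≤ x' t i ∧ x' t i ≤ dmax i) :
    ∀ t ∈ Set.Icc (0 : ℝ) η, ∀ i, xlb i ≤ x t i ∧ x t i ≤ xub i := by
  have hxc : ContinuousOn x (Icc 0 η) := fun t ht => (hx t ht).continuousAt.continuousWithinAt
  have hbox : MapsTo x (Icc 0 η) (univ.pi fun i => Ioo (xlb i) (xub i)) := by
    refine hxc.mapsTo_Icc_of_forall_mapsTo_Ico
      (isOpen_set_pi finite_univ fun i _ => isOpen_Ioo) fun t ht hbefore i _ => ?_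
    have hsub : Icc 0 t ⊆ Icc 0 η := Icc_subset_Icc_right ht.2
    have hdisp := sub_mem_Icc_of_hasDerivAt_of_mem_Icc (f := fun s => x s i) ht.1
      (fun s hs => hasDerivAt_pi.1 (hx s (hsub hs)) i) fun s hs =>
        hder s (hsub (Ioo_subset_Icc_self hs))
          (fun j => Ioo_subset_Icc_self (hbefore (Ioo_subset_Ico_self hs) j trivial)) i
    have hlow := min_zero_mul_le_mul_of_mem_Icc (d := dmin i) ht
    have hhigh := mul_le_max_zero_mul_of_mem_Icc (d := dmax i) ht
    have hdec : μdec i = -min 0 (η * dmin i) := by rw [hμdec, abs_of_nonpos (min_le_left _ _)]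
    have hinc : μinc i = max 0 (η * dmax i) := by rw [hμinc, abs_of_nonneg (le_max_left _ _)]
    rw [sub_zero] at hdisp
    constructor <;> linarith [hdisp.1, hdisp.2, h0 i]
  exact fun t ht i => Ioo_subset_Icc_self (hbox ht i trivial)

/-- Lemma 1: starting in the restricted admissible set, the trajectory
stays in the admissible set for one control period. -/
theorem stmt_4 {k : ℕ} (η : ℝ) (hη : 0 < η)
    (x x' : ℝ → (Fin k → ℝ))
    (hx : ∀ t ∈ Set.Icc (0 : ℝ) η, HasDerivAt x (x' t) t)
    (hx'c : ContinuousOn x' (Set.Icc 0 η))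
    (xlb xub dmin dmax μdec μinc : Fin k → ℝ)
    (hμdec : ∀ i, μdec i = |min 0 (η * dmin i)|)
    (hμinc : ∀ i, μinc i = |max 0 (η * dmax i)|)
    (h0 : ∀ i, xlb i + μdec i < x 0 i ∧ x 0 i < xub i - μinc i)
    (hder : ∀ t ∈ Set.Icc (0 : ℝ) η,
      (∀ i, xlb i ≤ x t i ∧ x t i ≤ xub i) →
      ∀ i, dmin i ≤ x' t i ∧ x' t i ≤ dmax i) :
    ∀ t ∈ Set.Icc (0 : ℝ) η, ∀ i, xlb i ≤ x t i ∧ x t i ≤ xub i :=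
  stmt_4_general η x x' hx xlb xub dmin dmax μdec μinc hμdec hμinc h0 hder
end

section
/- In the one-dimensional case: let x : [0,η] → ℝ be continuously differentiable with x_lb + μ_dec < x(0) < x_ub − μ_inc, where μ_dec = |min(0, η·d_min)|, μ_inc = |max(0, η·d_max)|, and suppose that for every t with x_lb ≤ x(t) ≤ x_ub we have d_min ≤ x'(t) ≤ d_max. Then x_lb ≤ x(t) ≤ x_ub for all t ∈ [0,η]. -/
/-- Auxiliary: a function with nonnegative derivative on `[a,b]` satisfies `f a ≤ f b`. -/
lemma aux_mono (a b : ℝ) (hab : a ≤ b) (f f' : ℝ → ℝ)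
    (hf : ∀ t ∈ Set.Icc a b, HasDerivAt f (f' t) t)
    (h0 : ∀ t ∈ Set.Icc a b, 0 ≤ f' t) : f a ≤ f b := by
  have hmono : MonotoneOn f (Set.Icc a b) := by
    apply monotoneOn_of_deriv_nonneg (convex_Icc a b)
    · exact fun t ht => ((hf t ht).continuousAt).continuousWithinAt
    · intro t ht
      rw [interior_Icc] at ht
      exact ((hf t (Set.Ioo_subset_Icc_self ht)).differentiableAt).differentiableWithinAt
    · intro t ht
      rw [interior_Icc] at ht
      rw [(hf t (Set.Ioo_subset_Icc_self ht)).deriv]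
      exact h0 t (Set.Ioo_subset_Icc_self ht)
  exact hmono (Set.left_mem_Icc.2 hab) (Set.right_mem_Icc.2 hab) hab

/-- scalar special case of the admissible-region preservation lemma. -/
theorem stmt_5 (η : ℝ) (hη : 0 < η)
    (x x' : ℝ → ℝ)
    (hx : ∀ t ∈ Set.Icc (0 : ℝ) η, HasDerivAt x (x' t) t)
    (hx'c : ContinuousOn x' (Set.Icc 0 η))
    (xlb xub dmin dmax μdec μinc : ℝ)
    (hμdec : μdec = |min 0 (η * dmin)|)
    (hμinc : μinc = |max 0 (η * dmax)|)
    (h0 : xlb + μdec < x 0 ∧ x 0 < xub - μinc)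
    (hder : ∀ t ∈ Set.Icc (0 : ℝ) η, xlb ≤ x t → x t ≤ xub → dmin ≤ x' t ∧ x' t ≤ dmax) :
    ∀ t ∈ Set.Icc (0 : ℝ) η, xlb ≤ x t ∧ x t ≤ xub := by
  have hμdec0 : 0 ≤ μdec := hμdec ▸ abs_nonneg _
  have hμinc0 : 0 ≤ μinc := hμinc ▸ abs_nonneg _
  have hμdec' : μdec = -(min 0 (η * dmin)) := by
    rw [hμdec, abs_of_nonpos (min_le_left _ _)]
  have hμinc' : μinc = max 0 (η * dmax) := by
    rw [hμinc, abs_of_nonneg (le_max_left _ _)]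
  -- The invariant set
  set S : Set ℝ := {t | t ∈ Set.Icc (0:ℝ) η ∧ ∀ s ∈ Set.Icc (0:ℝ) t, xlb ≤ x s ∧ x s ≤ xub}
    with hS
  have hx0 : xlb ≤ x 0 ∧ x 0 ≤ xub := ⟨by linarith [h0.1], by linarith [h0.2]⟩
  have h0S : (0:ℝ) ∈ S := by
    refine ⟨⟨le_refl 0, le_of_lt hη⟩, ?_⟩
    intro s hs
    have : s = 0 := le_antisymm hs.2 hs.1
    rw [this]; exact hx0
  have hbdd : BddAbove S := ⟨η, fun t ht => ht.1.2⟩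
  have hne : S.Nonempty := ⟨0, h0S⟩
  set T := sSup S with hT
  have hT0 : 0 ≤ T := le_csSup hbdd h0S
  have hTη : T ≤ η := csSup_le hne fun t ht => ht.1.2
  -- bounds hold on [0, T)
  have hIco : ∀ s ∈ Set.Ico (0:ℝ) T, xlb ≤ x s ∧ x s ≤ xub := by
    intro s hs
    obtain ⟨t, htS, hst⟩ := exists_lt_of_lt_csSup hne hs.2
    exact htS.2 s ⟨hs.1, le_of_lt hst⟩
  -- bounds hold at T, hence T ∈ S
  have hTmem : ∀ s ∈ Set.Icc (0:ℝ) T, xlb ≤ x s ∧ x s ≤ xub := by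
    intro s hs
    rcases lt_or_eq_of_le hs.2 with h | h
    · exact hIco s ⟨hs.1, h⟩
    · subst h
      rcases eq_or_lt_of_le hT0 with h' | h'
      · rw [← h']; exact hx0
      · -- s = T > 0 : use left-limit
        have hcont : ContinuousAt x T := (hx T ⟨hT0, hTη⟩).continuousAt
        have htend : Filter.Tendsto x (nhdsWithin T (Set.Ico 0 T)) (nhds (x T)) :=
          hcont.continuousWithinAt.tendsto
        have hnb : (nhdsWithin T (Set.Ico 0 T)).NeBot := by
          apply mem_closure_iff_nhdsWithin_neBot.1
          rw [closure_Ico (ne_of_lt h')]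
          exact ⟨hT0, le_refl T⟩
        constructor
        · refine ge_of_tendsto htend ?_
          filter_upwards [self_mem_nhdsWithin] with u hu using (hIco u hu).1
        · refine le_of_tendsto htend ?_
          filter_upwards [self_mem_nhdsWithin] with u hu using (hIco u hu).2
  have hTS : T ∈ S := ⟨⟨hT0, hTη⟩, hTmem⟩
  -- quantitative strict bounds on [0, T]
  have hstrict : ∀ s ∈ Set.Icc (0:ℝ) T, xlb < x s ∧ x s < xub := by
    intro s hs
    have hsub : Set.Icc (0:ℝ) s ⊆ Set.Icc 0 η :=
      Set.Icc_subset_Icc (le_refl 0) (le_trans hs.2 hTη)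
    have hd : ∀ u ∈ Set.Icc (0:ℝ) s, dmin ≤ x' u ∧ x' u ≤ dmax := by
      intro u hu
      have hu' : u ∈ Set.Icc (0:ℝ) T := ⟨hu.1, le_trans hu.2 hs.2⟩
      exact hder u (hsub hu) (hTmem u hu').1 (hTmem u hu').2
    -- lower bound
    have hlow : x 0 + dmin * s ≤ x s := by
      have := aux_mono 0 s hs.1 (fun u => x u - dmin * u) (fun u => x' u - dmin)
        (fun u hu => ((hx u (hsub hu)).sub ((hasDerivAt_id u).const_mul dmin)).congr_deriv
          (by ring))
        (fun u hu => sub_nonneg.2 (hd u hu).1)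
      simp at this
      linarith
    have hup : x s ≤ x 0 + dmax * s := by
      have := aux_mono 0 s hs.1 (fun u => dmax * u - x u) (fun u => dmax - x' u)
        (fun u hu => (((hasDerivAt_id u).const_mul dmax).sub (hx u (hsub hu))).congr_deriv
          (by ring))
        (fun u hu => sub_nonneg.2 (hd u hu).2)
      simp at this
      linarith
    have hsη : s ≤ η := le_trans hs.2 hTη
    have hmin : min 0 (η * dmin) ≤ dmin * s := by
      rcases le_or_gt 0 dmin with h | h
      · exact le_trans (min_le_left _ _) (mul_nonneg h hs.1)
      · calc min 0 (η * dmin) ≤ η * dmin := min_le_right _ _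
          _ ≤ s * dmin := by nlinarith
          _ = dmin * s := mul_comm _ _
    have hmax : dmax * s ≤ max 0 (η * dmax) := by
      rcases le_or_gt 0 dmax with h | h
      · calc dmax * s = s * dmax := mul_comm _ _
          _ ≤ η * dmax := by nlinarith
          _ ≤ max 0 (η * dmax) := le_max_right _ _
      · exact le_trans (mul_nonpos_of_nonpos_of_nonneg (le_of_lt h) hs.1) (le_max_left _ _)
    constructor
    · have : xlb + μdec < x 0 := h0.1
      rw [hμdec'] at this
      linarith
    · have : x 0 < xub - μinc := h0.2
      rw [hμinc'] at this
      linarith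
  -- T must be η
  have hTeq : T = η := by
    by_contra hne'
    have hTlt : T < η := lt_of_le_of_ne hTη hne'
    have hxT := hstrict T ⟨hT0, le_refl T⟩
    have hcont : ContinuousAt x T := (hx T ⟨hT0, hTη⟩).continuousAt
    have hε : (0:ℝ) < min (x T - xlb) (xub - x T) := by
      apply lt_min <;> linarith [hxT.1, hxT.2]
    obtain ⟨δ, hδ0, hδ⟩ := Metric.continuousAt_iff.1 hcont _ hε
    set T' := min (T + δ/2) η with hT'
    have hT'T : T < T' := lt_min (by linarith) hTlt
    have hT'η : T' ≤ η := min_le_right _ _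
    have hT'S : T' ∈ S := by
      refine ⟨⟨le_trans hT0 (le_of_lt hT'T), hT'η⟩, ?_⟩
      intro s hs
      rcases le_or_gt s T with h | h
      · exact hTmem s ⟨hs.1, h⟩
      · have hsd : dist s T < δ := by
          rw [Real.dist_eq, abs_of_nonneg (by linarith)]
          have : s ≤ T + δ/2 := le_trans hs.2 (min_le_left _ _)
          linarith
        have := hδ hsd
        rw [Real.dist_eq] at this
        have h1 := abs_lt.1 this
        constructor
        · linarith [h1.1, min_le_left (x T - xlb) (xub - x T)]
        · linarith [h1.2, min_le_right (x T - xlb) (xub - x T)]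
    exact absurd (le_csSup hbdd hT'S) (not_le.2 hT'T)
  intro t ht
  exact hTmem t ⟨ht.1, hTeq ▸ ht.2⟩
end

section
/- Suppose a discrete-time switched system evolves in time steps of length η, starting at a recoverable state x₀ ∈ R, where at each step either the decision module keeps the advanced controller (only when the forward switching condition FSC is false) or switches to a baseline controller that keeps the system in R ∖ U forever. If FSC satisfies: for every recoverable x and action u, (Reach_{≤η}(x,u) ∩ U ≠ ∅ ∨ Reach_{=η}(x,u) ⊄ R) → FSC(x,u), then the system state is safe (not in U) at all times. -/
/-- Theorem 1: a Simplex architecture whose forward switching condition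
satisfies the definition keeps the system invariably safe from a recoverable start.
`x j` is the state at the `j`-th step boundary, `W j` is the set of states visited
during step `j`, `mode j = true` means the advanced controller is in control. -/
theorem stmt_8 {k : ℕ} (Act : Type)
    (R U : Set (Fin k → ℝ)) (hRU : R ∩ U = ∅)
    (ReachLe ReachEq : (Fin k → ℝ) → Act → Set (Fin k → ℝ))
    (FSC : (Fin k → ℝ) → Act → Prop)
    (hFSC : ∀ x ∈ R, ∀ u : Act,
      ((ReachLe x u ∩ U).Nonempty ∨ ¬ ReachEq x u ⊆ R) → FSC x u)
    (x : ℕ → (Fin k → ℝ)) (W : ℕ → Set (Fin k → ℝ))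
    (u : ℕ → Act) (mode : ℕ → Bool)
    (hx0 : x 0 ∈ R)
    -- advanced controller step: allowed only when FSC is false
    (hAC : ∀ j, mode j = true →
      ¬ FSC (x j) (u j) ∧ x (j + 1) ∈ ReachEq (x j) (u j) ∧ W j ⊆ ReachLe (x j) (u j))
    -- baseline controller step: keeps the system in R and away from U
    (hBC : ∀ j, mode j = false → x j ∈ R →
      x (j + 1) ∈ R ∧ W j ⊆ R \ U) :
    ∀ j, x j ∈ R ∧ x j ∉ U ∧ W j ∩ U = ∅ := by
  have key : ∀ j, x j ∈ R → x (j + 1) ∈ R ∧ W j ∩ U = ∅ := by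
    intro j hj
    cases hm : mode j with
    | false =>
      obtain ⟨h1, h2⟩ := hBC j hm hj
      refine ⟨h1, ?_⟩
      ext y
      simp only [Set.mem_inter_iff, Set.mem_empty_iff_false, iff_false, not_and]
      intro hy
      exact (h2 hy).2
    | true =>
      obtain ⟨hnF, hEq, hLe⟩ := hAC j hm
      have h1 : ¬ ((ReachLe (x j) (u j) ∩ U).Nonempty ∨ ¬ ReachEq (x j) (u j) ⊆ R) := by
        intro h
        exact hnF (hFSC (x j) hj (u j) h)
      push_neg at h1
      refine ⟨h1.2 hEq, ?_⟩
      ext y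
      simp only [Set.mem_inter_iff, Set.mem_empty_iff_false, iff_false, not_and]
      intro hy hyU
      exact Set.eq_empty_iff_forall_notMem.mp h1.1 y ⟨hLe hy, hyU⟩
  have hR : ∀ j, x j ∈ R := by
    intro j
    induction j with
    | zero => exact hx0
    | succ n ih => exact (key n ih).1
  intro j
  refine ⟨hR j, ?_, (key j (hR j)).2⟩
  intro hU
  have : x j ∈ R ∩ U := ⟨hR j, hU⟩
  rw [hRU] at this
  exact this
end

section
/- Let h be a barrier certificate with Z(h) = {x : h(x) > 0} ⊆ R and h(x) ≤ 0 for x ∈ U ∪ (ℝ^k ∖ R). Define α(x,u) := (ĥ(x,u) − λ(u) ≤ 0) and β(x,u) := (x ∉ A_r(u)). Assume: (i) if x ∈ A_r(u) then every trajectory from x under u stays in the admissible set A during [0,η]; (ii) if the trajectory stays in A during [0,η], then ĥ(x,u) − λ(u) is a lower bound on h(x') for every x' reachable from x under u within time η. Then α(x,u) ∨ β(x,u) is a forward switching condition: for every recoverable x and action u, if some state reachable within time η is unsafe or the state reached at time η is unrecoverable, then α(x,u) ∨ β(x,u) holds. -/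
/-- Theorem 2: the barrier-certificate-based condition α ∨ β is a
forward switching condition. -/
theorem stmt_9 {k : ℕ} (Act : Type)
    (R U : Set (Fin k → ℝ)) (hRU : R ∩ U = ∅)
    (ReachLe ReachEq : (Fin k → ℝ) → Act → Set (Fin k → ℝ))
    (hsub : ∀ x u, ReachEq x u ⊆ ReachLe x u)
    (h : (Fin k → ℝ) → ℝ)
    (hZ : ∀ y, h y > 0 → y ∈ R)
    (hU : ∀ y, y ∈ U ∪ Rᶜ → h y ≤ 0)
    (A : Set (Fin k → ℝ)) (Ar : Act → Set (Fin k → ℝ))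
    (hhat : (Fin k → ℝ) → Act → ℝ) (lam : Act → ℝ)
    -- (i) from the restricted admissible set, the trajectory stays admissible
    (hi : ∀ x u, x ∈ Ar u → ReachLe x u ⊆ A)
    -- (ii) if the trajectory stays admissible, the Taylor lower bound is valid
    (hii : ∀ x u, ReachLe x u ⊆ A → ∀ x' ∈ ReachLe x u, hhat x u - lam u ≤ h x') :
    ∀ x ∈ R, ∀ u : Act,
      ((ReachLe x u ∩ U).Nonempty ∨ ¬ ReachEq x u ⊆ R) →
      (hhat x u - lam u ≤ 0 ∨ x ∉ Ar u) := by
  intro x hx u hbad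
  by_contra hcon
  push_neg at hcon
  obtain ⟨hpos, hAr⟩ := hcon
  have hA : ReachLe x u ⊆ A := hi x u hAr
  have hlb := hii x u hA
  rcases hbad with ⟨x', hx', hxU⟩ | hne
  · have h1 : h x' ≤ 0 := hU x' (Or.inl hxU)
    have := hlb x' hx'
    linarith
  · apply hne
    intro x' hx'
    exact hZ x' (lt_of_lt_of_le hpos (hlb x' (hsub x u hx')))
end
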